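/- arXiv:1408.6703 — 8 statements merged into one kernel-verified Lean document; each statement's English description precedes it below -/
import Mathlib

section
/- Let G be a group generated by involutions ρ₀, ρ₁, ρ₂ with (ρ₀ρ₂)² = 1, and set σ₁ = ρ₀ρ₁, σ₂ = ρ₁ρ₂. If σ₂⁻¹σ₁ = σ₁^i σ₂^j for some integers i, j, then σ₂⁻¹ commutes with σ₁^(i+1). -/
/-!
Conjugation by ρ₁ inverts both σ₁ = ρ₀ρ₁ and σ₂ = ρ₁ρ₂. Applying it to the relation and
inverting gives σ₁σ₂⁻¹ = σ₂^j σ₁^i, so that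
σ₂⁻¹σ₁^(i+1) = (σ₂⁻¹σ₁)σ₁^i = σ₁^i (σ₂^j σ₁^i) = σ₁^i (σ₁σ₂⁻¹) = σ₁^(i+1)σ₂⁻¹.
-/

section

variable {G : Type*} [Group G]

theorem inv_eq_self_of_sq_eq_one {a : G} (ha : a ^ 2 = 1) : a⁻¹ = a :=
  inv_eq_of_mul_eq_one_right (by rwa [← sq])

theorem conj_mul_left_eq_inv_of_sq_eq_one {a b : G} (ha : a ^ 2 = 1) (hb : b ^ 2 = 1) :
    a * (a * b) * a⁻¹ = (a * b)⁻¹ := by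
  rw [mul_inv_rev, inv_eq_self_of_sq_eq_one hb, ← mul_assoc, ← sq, ha, one_mul]

theorem conj_mul_right_eq_inv_of_sq_eq_one {a b : G} (ha : a ^ 2 = 1) (hb : b ^ 2 = 1) :
    a * (b * a) * a⁻¹ = (b * a)⁻¹ := by
  rw [← mul_assoc, mul_inv_cancel_right, mul_inv_rev, inv_eq_self_of_sq_eq_one ha,
    inv_eq_self_of_sq_eq_one hb]

theorem commute_inv_zpow_succ_of_inv_mul_eq (φ : G →* G) {x y : G}
    (hx : φ x = x⁻¹) (hy : φ y = y⁻¹) {i j : ℤ} (hrel : y⁻¹ * x = x ^ i * y ^ j) :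
    Commute y⁻¹ (x ^ (i + 1)) := by
  have hφ : y * x⁻¹ = x⁻¹ ^ i * y⁻¹ ^ j := by
    simpa [hx, hy] using congrArg φ hrel
  have hswap : x * y⁻¹ = y ^ j * x ^ i := by
    simpa [mul_inv_rev, inv_zpow] using congrArg (·⁻¹) hφ
  calc y⁻¹ * x ^ (i + 1) = (y⁻¹ * x) * x ^ i := by rw [add_comm, zpow_one_add, mul_assoc]
    _ = x ^ i * (y ^ j * x ^ i) := by rw [hrel, mul_assoc]
    _ = x ^ i * (x * y⁻¹) := by rw [hswap]
    _ = x ^ (i + 1) * y⁻¹ := by rw [zpow_add_one, mul_assoc]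

end

theorem stmt_1_general {G : Type*} [Group G] (ρ0 ρ1 ρ2 : G)
    (h0 : ρ0 ^ 2 = 1) (h1 : ρ1 ^ 2 = 1) (h2 : ρ2 ^ 2 = 1)
    (σ1 σ2 : G) (hσ1 : σ1 = ρ0 * ρ1) (hσ2 : σ2 = ρ1 * ρ2)
    (i j : ℤ) (hrel : σ2⁻¹ * σ1 = σ1 ^ i * σ2 ^ j) :
    σ2⁻¹ * σ1 ^ (i + 1) = σ1 ^ (i + 1) * σ2⁻¹ := by
  subst hσ1 hσ2
  refine (commute_inv_zpow_succ_of_inv_mul_eq (MulAut.conj ρ1) ?_ ?_ hrel).eq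
  · exact conj_mul_right_eq_inv_of_sq_eq_one h1 h0
  · exact conj_mul_left_eq_inv_of_sq_eq_one h1 h2

theorem stmt_1 {G : Type*} [Group G] (ρ0 ρ1 ρ2 : G)
    (h0 : ρ0 ^ 2 = 1) (h1 : ρ1 ^ 2 = 1) (h2 : ρ2 ^ 2 = 1)
    (h02 : (ρ0 * ρ2) ^ 2 = 1)
    (hgen : Subgroup.closure {ρ0, ρ1, ρ2} = ⊤)
    (σ1 σ2 : G) (hσ1 : σ1 = ρ0 * ρ1) (hσ2 : σ2 = ρ1 * ρ2)
    (i j : ℤ) (hrel : σ2⁻¹ * σ1 = σ1 ^ i * σ2 ^ j) :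
    σ2⁻¹ * σ1 ^ (i + 1) = σ1 ^ (i + 1) * σ2⁻¹ :=
  stmt_1_general ρ0 ρ1 ρ2 h0 h1 h2 σ1 σ2 hσ1 hσ2 i j hrel
end

section
/- Let G be a group generated by involutions ρ₀, ρ₁, ρ₂ with (ρ₀ρ₂)² = 1, and set σ₁ = ρ₀ρ₁, σ₂ = ρ₁ρ₂. If σ₂⁻¹σ₁ = σ₁^i σ₂^j, then conjugation by each of ρ₀, ρ₁, ρ₂ inverts σ₁^(i+1); in particular the cyclic subgroup ⟨σ₁^(i+1)⟩ is normal in G. -/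
/-!
Conjugation by `ρ₁` inverts both `σ₁` and `σ₂`; applying it to `σ₂⁻¹σ₁ = σ₁^i σ₂^j` and comparing
with the inverse of that relation gives `σ₁^i σ₂ σ₁⁻¹ = σ₂^(-j) = σ₁⁻¹ σ₂ σ₁^i`, i.e. `σ₁^(i+1)`
commutes with `σ₂`. Since `ρ₀` and `ρ₁` invert `σ₁` and `ρ₂ = ρ₁σ₂`, each generator inverts
`σ₁^(i+1)`, hence normalizes the cyclic group it generates.
-/

section Conjugation

variable {G : Type*} [Group G]

lemma inv_eq_of_sq_eq_one {x : G} (hx : x ^ 2 = 1) : x⁻¹ = x :=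
  inv_eq_of_mul_eq_one_right (by rw [← sq, hx])

lemma conj_mul_left_of_sq_eq_one {x y : G} (hx : x ^ 2 = 1) (hy : y ^ 2 = 1) :
    x * (x * y) * x⁻¹ = (x * y)⁻¹ := by
  rw [mul_inv_rev, inv_eq_of_sq_eq_one hx, inv_eq_of_sq_eq_one hy, ← mul_assoc, ← sq, hx, one_mul]

lemma conj_mul_right_of_sq_eq_one {x y : G} (hx : x ^ 2 = 1) (hy : y ^ 2 = 1) :
    y * (x * y) * y⁻¹ = (x * y)⁻¹ := by
  rw [mul_inv_rev, inv_eq_of_sq_eq_one hx, inv_eq_of_sq_eq_one hy, mul_assoc, mul_assoc, ← sq, hy,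
    mul_one]

lemma conj_zpow_eq_inv {g a : G} (h : g * a * g⁻¹ = a⁻¹) (n : ℤ) :
    g * a ^ n * g⁻¹ = (a ^ n)⁻¹ := by
  rw [← conj_zpow, h, inv_zpow]

lemma mul_conj_eq_inv_of_commute {g a b : G} (h : g * a * g⁻¹ = a⁻¹) (hab : Commute a b) :
    g * b * a * (g * b)⁻¹ = a⁻¹ := by
  rw [← h, mul_inv_rev, mul_assoc g b a, ← hab.eq]
  group

lemma commute_zpow_add_one_of_inv_mul_eq {t a b : G} (ha : t * a * t⁻¹ = a⁻¹)
    (hb : t * b * t⁻¹ = b⁻¹) {i j : ℤ} (h : b⁻¹ * a = a ^ i * b ^ j) :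
    Commute (a ^ (i + 1)) b := by
  have hconj : b * a⁻¹ = a ^ (-i) * b ^ (-j) := by
    have h' := congrArg (MulAut.conj t) h
    simp only [map_mul, map_inv, map_zpow, MulAut.conj_apply, ha, hb] at h'
    simpa [zpow_neg] using h'
  have hinv : a⁻¹ * b = b ^ (-j) * a ^ (-i) := by
    simpa [mul_inv_rev, zpow_neg] using congrArg (·⁻¹) h
  have key : a ^ i * b * a⁻¹ = a⁻¹ * b * a ^ i := by
    rw [mul_assoc, hconj, hinv, mul_assoc, ← mul_assoc, ← zpow_add, ← zpow_add]
    simp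
  calc a ^ (i + 1) * b = a * (a ^ i * b * a⁻¹) * a := by group
    _ = a * (a⁻¹ * b * a ^ i) * a := by rw [key]
    _ = b * a ^ (i + 1) := by group

lemma mem_normalizer_zpowers_of_conj_eq_inv {g a : G} (h : g * a * g⁻¹ = a⁻¹) :
    g ∈ Subgroup.normalizer (Subgroup.zpowers a : Set G) := by
  rw [Subgroup.mem_normalizer_iff_map_conj_eq, MonoidHom.map_zpowers]
  simp [MulAut.conj_apply, h]

lemma Subgroup.normal_of_closure_eq_top {s : Set G} {H : Subgroup G} (hs : closure s = ⊤)
    (hsH : s ⊆ normalizer (H : Set G)) : H.Normal := by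
  rw [← normalizer_eq_top_iff, eq_top_iff, ← hs, closure_le]
  exact hsH

end Conjugation

theorem stmt_2_general {G : Type*} [Group G] (ρ0 ρ1 ρ2 : G)
    (h0 : ρ0 ^ 2 = 1) (h1 : ρ1 ^ 2 = 1) (h2 : ρ2 ^ 2 = 1)
    (hgen : Subgroup.closure {ρ0, ρ1, ρ2} = ⊤)
    (σ1 σ2 : G) (hσ1 : σ1 = ρ0 * ρ1) (hσ2 : σ2 = ρ1 * ρ2)
    (i j : ℤ) (hrel : σ2⁻¹ * σ1 = σ1 ^ i * σ2 ^ j) :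
    (ρ0 * σ1 ^ (i + 1) * ρ0⁻¹ = (σ1 ^ (i + 1))⁻¹ ∧
     ρ1 * σ1 ^ (i + 1) * ρ1⁻¹ = (σ1 ^ (i + 1))⁻¹ ∧
     ρ2 * σ1 ^ (i + 1) * ρ2⁻¹ = (σ1 ^ (i + 1))⁻¹) ∧
    (Subgroup.zpowers (σ1 ^ (i + 1))).Normal := by
  have inv0σ1 : ρ0 * σ1 * ρ0⁻¹ = σ1⁻¹ := hσ1 ▸ conj_mul_left_of_sq_eq_one h0 h1
  have inv1σ1 : ρ1 * σ1 * ρ1⁻¹ = σ1⁻¹ := hσ1 ▸ conj_mul_right_of_sq_eq_one h0 h1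
  have inv1σ2 : ρ1 * σ2 * ρ1⁻¹ = σ2⁻¹ := hσ2 ▸ conj_mul_left_of_sq_eq_one h1 h2
  have hρ2_eq : ρ2 = ρ1 * σ2 := by
    rw [hσ2, ← mul_assoc, ← pow_two, h1, one_mul]
  have inv2 : ρ2 * σ1 ^ (i + 1) * ρ2⁻¹ = (σ1 ^ (i + 1))⁻¹ := hρ2_eq ▸
    mul_conj_eq_inv_of_commute (conj_zpow_eq_inv inv1σ1 _)
      (commute_zpow_add_one_of_inv_mul_eq inv1σ1 inv1σ2 hrel)
  refine ⟨⟨conj_zpow_eq_inv inv0σ1 _, conj_zpow_eq_inv inv1σ1 _, inv2⟩,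
    Subgroup.normal_of_closure_eq_top hgen ?_⟩
  rintro g (rfl | rfl | rfl)
  · exact mem_normalizer_zpowers_of_conj_eq_inv (conj_zpow_eq_inv inv0σ1 _)
  · exact mem_normalizer_zpowers_of_conj_eq_inv (conj_zpow_eq_inv inv1σ1 _)
  · exact mem_normalizer_zpowers_of_conj_eq_inv inv2

theorem stmt_2 {G : Type*} [Group G] (ρ0 ρ1 ρ2 : G)
    (h0 : ρ0 ^ 2 = 1) (h1 : ρ1 ^ 2 = 1) (h2 : ρ2 ^ 2 = 1)
    (h02 : (ρ0 * ρ2) ^ 2 = 1)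
    (hgen : Subgroup.closure {ρ0, ρ1, ρ2} = ⊤)
    (σ1 σ2 : G) (hσ1 : σ1 = ρ0 * ρ1) (hσ2 : σ2 = ρ1 * ρ2)
    (i j : ℤ) (hrel : σ2⁻¹ * σ1 = σ1 ^ i * σ2 ^ j) :
    (ρ0 * σ1 ^ (i + 1) * ρ0⁻¹ = (σ1 ^ (i + 1))⁻¹ ∧
     ρ1 * σ1 ^ (i + 1) * ρ1⁻¹ = (σ1 ^ (i + 1))⁻¹ ∧
     ρ2 * σ1 ^ (i + 1) * ρ2⁻¹ = (σ1 ^ (i + 1))⁻¹) ∧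
    (Subgroup.zpowers (σ1 ^ (i + 1))).Normal :=
  stmt_2_general ρ0 ρ1 ρ2 h0 h1 h2 hgen σ1 σ2 hσ1 hσ2 i j hrel
end

section
/- Let G be a group generated by involutions ρ₀, ρ₁, ρ₂ with (ρ₀ρ₂)² = 1, and set σ₁ = ρ₀ρ₁, σ₂ = ρ₁ρ₂. If σ₂⁻¹σ₁ = σ₁^i σ₂^j, then ⟨σ₂^(j-1)⟩ is a normal subgroup of G. -/
/-!
Both `ρ₁` and `ρ₂` conjugate `σ₂` to its inverse, and `ρ₁` does the same to `σ₁`.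
Conjugating the relation by `ρ₁` and inverting gives `σ₁ σ₂⁻¹ = σ₂ʲ σ₁ⁱ`, which together
with the original relation shows that `σ₁` commutes with `s = σ₂ʲ⁻¹`. Hence `ρ₁`, `ρ₂` and
`ρ₀ = σ₁ ρ₁` all conjugate `s` to `s⁻¹`, so the generators of `G` normalize `⟨s⟩`.
-/

namespace Subgroup

variable {G : Type*} [Group G]

theorem mem_normalizer_zpowers_of_conj_eq_inv {g s : G} (h : g * s * g⁻¹ = s⁻¹) :
    g ∈ normalizer (zpowers s : Set G) := by
  rw [mem_normalizer_iff_map_conj_eq, MonoidHom.map_zpowers]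
  exact (congrArg zpowers h).trans zpowers_inv

theorem zpowers_normal_of_conj_eq_inv {S : Set G} (hS : closure S = ⊤) {s : G}
    (h : ∀ g ∈ S, g * s * g⁻¹ = s⁻¹) : (zpowers s).Normal := by
  rw [← normalizer_eq_top_iff, ← top_le_iff, ← hS, closure_le]
  exact fun g hg ↦ mem_normalizer_zpowers_of_conj_eq_inv (h g hg)

end Subgroup

section Involutions

variable {G : Type*} [Group G] {a b : G}

theorem inv_eq_of_sq_eq_one_s3 (ha : a ^ 2 = 1) : a⁻¹ = a :=
  inv_eq_of_mul_eq_one_right ((pow_two a).symm.trans ha)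

theorem conj_mul_eq_inv_of_sq_eq_one_left (ha : a ^ 2 = 1) (hb : b ^ 2 = 1) :
    a * (a * b) * a⁻¹ = (a * b)⁻¹ := by
  rw [mul_inv_rev, inv_eq_of_sq_eq_one_s3 hb, ← mul_assoc, ← pow_two, ha, one_mul]

theorem conj_mul_eq_inv_of_sq_eq_one_right (ha : a ^ 2 = 1) (hb : b ^ 2 = 1) :
    b * (a * b) * b⁻¹ = (a * b)⁻¹ := by
  rw [mul_inv_rev, inv_eq_of_sq_eq_one_s3 ha, inv_eq_of_sq_eq_one_s3 hb, mul_assoc, mul_assoc,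
    ← pow_two, hb, mul_one]

end Involutions

section Inverting

variable {G : Type*} [Group G] {r x y : G}

theorem conj_zpow_eq_inv_of_conj_eq_inv (h : r * x * r⁻¹ = x⁻¹) (k : ℤ) :
    r * x ^ k * r⁻¹ = (x ^ k)⁻¹ := by
  rw [← conj_zpow, h, inv_zpow]

theorem mul_conj_eq_inv_of_commute_s3 (hx : Commute x y) (hr : r * y * r⁻¹ = y⁻¹) :
    x * r * y * (x * r)⁻¹ = y⁻¹ := by
  calc x * r * y * (x * r)⁻¹ = x * (r * y * r⁻¹) * x⁻¹ := by group
    _ = y⁻¹ := by rw [hr, hx.inv_right.eq, mul_inv_cancel_right]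

theorem commute_zpow_sub_one_of_inv_mul_eq (hrx : r * x * r⁻¹ = x⁻¹)
    (hry : r * y * r⁻¹ = y⁻¹) {i j : ℤ} (hrel : y⁻¹ * x = x ^ i * y ^ j) :
    Commute x (y ^ (j - 1)) := by
  have hrel' : x * y⁻¹ = y ^ j * x ^ i := by
    calc x * y⁻¹
        _ = ((r * y * r⁻¹)⁻¹ * (r * x * r⁻¹))⁻¹ := by
          simp only [hrx, hry, mul_inv_rev, inv_inv]
        _ = (r * (y⁻¹ * x) * r⁻¹)⁻¹ := by group
        _ = (r * x ^ i * r⁻¹ * (r * y ^ j * r⁻¹))⁻¹ := by rw [hrel]; group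
        _ = y ^ j * x ^ i := by
          rw [conj_zpow_eq_inv_of_conj_eq_inv hrx, conj_zpow_eq_inv_of_conj_eq_inv hry,
            mul_inv_rev, inv_inv, inv_inv]
  calc x * y ^ (j - 1) = x * y⁻¹ * y ^ j := by group
    _ = y ^ j * (x ^ i * y ^ j) := by rw [hrel']; group
    _ = y ^ (j - 1) * x := by rw [← hrel]; group

end Inverting

theorem stmt_3_general {G : Type*} [Group G] (ρ0 ρ1 ρ2 : G)
    (h0 : ρ0 ^ 2 = 1) (h1 : ρ1 ^ 2 = 1) (h2 : ρ2 ^ 2 = 1)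
    (hgen : Subgroup.closure {ρ0, ρ1, ρ2} = ⊤)
    (σ1 σ2 : G) (hσ1 : σ1 = ρ0 * ρ1) (hσ2 : σ2 = ρ1 * ρ2)
    (i j : ℤ) (hrel : σ2⁻¹ * σ1 = σ1 ^ i * σ2 ^ j) :
    (Subgroup.zpowers (σ2 ^ (j - 1))).Normal := by
  have hρ1σ1 : ρ1 * σ1 * ρ1⁻¹ = σ1⁻¹ := hσ1 ▸ conj_mul_eq_inv_of_sq_eq_one_right h0 h1
  have hρ1σ2 : ρ1 * σ2 * ρ1⁻¹ = σ2⁻¹ := hσ2 ▸ conj_mul_eq_inv_of_sq_eq_one_left h1 h2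
  have hρ2σ2 : ρ2 * σ2 * ρ2⁻¹ = σ2⁻¹ := hσ2 ▸ conj_mul_eq_inv_of_sq_eq_one_right h1 h2
  have hcomm : Commute σ1 (σ2 ^ (j - 1)) :=
    commute_zpow_sub_one_of_inv_mul_eq hρ1σ1 hρ1σ2 hrel
  have hρ1 := conj_zpow_eq_inv_of_conj_eq_inv hρ1σ2 (j - 1)
  have hρ0 : ρ0 = σ1 * ρ1 := by rw [hσ1, mul_assoc, ← pow_two, h1, mul_one]
  refine Subgroup.zpowers_normal_of_conj_eq_inv hgen fun g hg ↦ ?_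
  rcases hg with rfl | rfl | rfl
  · exact hρ0 ▸ mul_conj_eq_inv_of_commute_s3 hcomm hρ1
  · exact hρ1
  · exact conj_zpow_eq_inv_of_conj_eq_inv hρ2σ2 (j - 1)

theorem stmt_3 {G : Type*} [Group G] (ρ0 ρ1 ρ2 : G)
    (h0 : ρ0 ^ 2 = 1) (h1 : ρ1 ^ 2 = 1) (h2 : ρ2 ^ 2 = 1)
    (h02 : (ρ0 * ρ2) ^ 2 = 1)
    (hgen : Subgroup.closure {ρ0, ρ1, ρ2} = ⊤)
    (σ1 σ2 : G) (hσ1 : σ1 = ρ0 * ρ1) (hσ2 : σ2 = ρ1 * ρ2)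
    (i j : ℤ) (hrel : σ2⁻¹ * σ1 = σ1 ^ i * σ2 ^ j) :
    (Subgroup.zpowers (σ2 ^ (j - 1))).Normal :=
  stmt_3_general ρ0 ρ1 ρ2 h0 h1 h2 hgen σ1 σ2 hσ1 hσ2 i j hrel
end

section
/- Let G be a group generated by involutions ρ₀, ρ₁, ρ₂ with (ρ₀ρ₂)² = 1, σ₁ = ρ₀ρ₁, σ₂ = ρ₁ρ₂. Suppose G satisfies σ₂⁻¹σ₁ = σ₁^i ρ₁ σ₂^j and σ₂⁻²σ₁ = σ₁^a σ₂^b. Then σ₂⁻¹σ₁² = σ₁^(i-a) ρ₁ σ₂^(b-j-2). -/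
/-!
Conjugation by the involution `ρ₁` inverts `σ₁`, so every `σ₁ ^ i * ρ₁` is an involution; by the
first relation so is `σ₂⁻¹ * σ₁ * σ₂ ^ (-j)`, and together with `(σ₁ * σ₂) ^ 2 = (ρ₀ * ρ₂) ^ 2 = 1`
this shows that conjugation by `σ₁` inverts `σ₂ ^ (j + 2)`. The second relation turns
`σ₁ ^ a * σ₂ ^ (b - j)` into `σ₂⁻¹ * σ₁ ^ i * ρ₁`, and substituting both facts into
`σ₁ ^ (i - a) * ρ₁ * σ₂ ^ (b - j - 2)` collapses it to `σ₂⁻¹ * σ₁ ^ 2`.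
-/

section

variable {G : Type*} [Group G]

theorem semiconjBy_mul_inv_of_sq_eq_one {a b : G} (ha : a ^ 2 = 1) (hb : b ^ 2 = 1) :
    SemiconjBy b (a * b) (a * b)⁻¹ := by
  have ha' : a⁻¹ = a := inv_eq_of_mul_eq_one_left (by rw [← sq, ha])
  have hb' : b⁻¹ = b := inv_eq_of_mul_eq_one_left (by rw [← sq, hb])
  rw [SemiconjBy, mul_inv_rev, ha', hb', mul_assoc]

theorem sq_zpow_mul_eq_one {r s : G} (hr : r ^ 2 = 1) (hs : SemiconjBy r s s⁻¹) (n : ℤ) :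
    (s ^ n * r) ^ 2 = 1 := by
  have hsn : r * s ^ n = s⁻¹ ^ n * r := hs.zpow_right n
  calc (s ^ n * r) ^ 2 = s ^ n * (r * s ^ n) * r := by rw [sq]; group
    _ = r ^ 2 := by rw [hsn, sq]; group
    _ = 1 := hr

theorem mul_zpow_sub_one_eq_of_sq_eq_one {s t : G} {k : ℤ} (h₁ : (s * t) ^ 2 = 1)
    (hk : (s * t ^ k) ^ 2 = 1) : s * t ^ (k - 1) = t ^ (1 - k) * s := by
  have hst : s * t * s = t⁻¹ := eq_inv_of_mul_eq_one_left (by rw [← h₁, sq]; group)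
  have hstk : s * t ^ k = t ^ (-k) * s⁻¹ := by
    rw [eq_mul_inv_iff_mul_eq, ← mul_inv_eq_one, ← hk, sq]; group
  calc s * t ^ (k - 1) = s * t ^ k * t⁻¹ := by group
    _ = t ^ (1 - k) * s := by rw [hstk, ← hst]; group

theorem inv_mul_sq_eq_of_inv_mul_eq_of_inv_sq_mul_eq {r s t : G} {i j a b : ℤ} (hr : r ^ 2 = 1)
    (hs : SemiconjBy r s s⁻¹) (hst : (s * t) ^ 2 = 1)
    (hrel1 : t⁻¹ * s = s ^ i * r * t ^ j) (hrel2 : t⁻¹ ^ 2 * s = s ^ a * t ^ b) :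
    t⁻¹ * s ^ 2 = s ^ (i - a) * r * t ^ (b - j - 2) := by
  have hu : s ^ i * r = t⁻¹ * s * t ^ (-j) := by rw [hrel1]; group
  have hinv : s * t ^ (-(j + 2)) = t ^ (j + 2) * s := by
    have hu2 : (s * t ^ (-(j + 1))) ^ 2 = 1 := by
      have hconj : s * t ^ (-(j + 1)) = t * (s ^ i * r) * t⁻¹ := by rw [hu]; group
      rw [hconj, conj_pow, sq_zpow_mul_eq_one hr hs, mul_one, mul_inv_cancel]
    convert mul_zpow_sub_one_eq_of_sq_eq_one hst hu2 using 3 <;> ring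
  have hsr : s ^ (-a) * r = r * s ^ a := by
    rw [(hs.zpow_right a).eq, inv_zpow']
  have hab : s ^ a * t ^ (b - j) = t⁻¹ * (s ^ i * r) := by
    calc s ^ a * t ^ (b - j) = t⁻¹ * (t⁻¹ * s) * t ^ (-j) := by
          rw [zpow_sub, ← mul_assoc, ← hrel2]; group
      _ = t⁻¹ * (s ^ i * r) := by rw [hrel1]; group
  symm
  calc s ^ (i - a) * r * t ^ (b - j - 2)
        = s ^ i * (s ^ (-a) * r) * t ^ (b - j) * t ^ (-2 : ℤ) := by group
    _ = (s ^ i * r) * (s ^ a * t ^ (b - j)) * t ^ (-2 : ℤ) := by rw [hsr]; group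
    _ = (s ^ i * r) * t⁻¹ * (s ^ i * r) * t ^ (-2 : ℤ) := by rw [hab]; group
    _ = t⁻¹ * s * t ^ (-(j + 2)) * (s * t ^ (-(j + 2))) := by rw [hu]; group
    _ = t⁻¹ * s ^ 2 := by rw [hinv, sq]; group

end

theorem stmt_6_general {G : Type*} [Group G] (ρ0 ρ1 ρ2 : G)
    (h0 : ρ0 ^ 2 = 1) (h1 : ρ1 ^ 2 = 1)
    (h02 : (ρ0 * ρ2) ^ 2 = 1)
    (σ1 σ2 : G) (hσ1 : σ1 = ρ0 * ρ1) (hσ2 : σ2 = ρ1 * ρ2)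
    (i j a b : ℤ)
    (hrel1 : σ2⁻¹ * σ1 = σ1 ^ i * ρ1 * σ2 ^ j)
    (hrel2 : σ2⁻¹ ^ 2 * σ1 = σ1 ^ a * σ2 ^ b) :
    σ2⁻¹ * σ1 ^ 2 = σ1 ^ (i - a) * ρ1 * σ2 ^ (b - j - 2) := by
  have hσ1σ2 : σ1 * σ2 = ρ0 * ρ2 := by
    rw [hσ1, hσ2, mul_assoc, ← mul_assoc ρ1, ← sq, h1, one_mul]
  refine inv_mul_sq_eq_of_inv_mul_eq_of_inv_sq_mul_eq h1 ?_ (hσ1σ2 ▸ h02) hrel1 hrel2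
  exact hσ1 ▸ semiconjBy_mul_inv_of_sq_eq_one h0 h1

theorem stmt_6 {G : Type*} [Group G] (ρ0 ρ1 ρ2 : G)
    (h0 : ρ0 ^ 2 = 1) (h1 : ρ1 ^ 2 = 1) (h2 : ρ2 ^ 2 = 1)
    (h02 : (ρ0 * ρ2) ^ 2 = 1)
    (hgen : Subgroup.closure {ρ0, ρ1, ρ2} = ⊤)
    (σ1 σ2 : G) (hσ1 : σ1 = ρ0 * ρ1) (hσ2 : σ2 = ρ1 * ρ2)
    (i j a b : ℤ)
    (hrel1 : σ2⁻¹ * σ1 = σ1 ^ i * ρ1 * σ2 ^ j)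
    (hrel2 : σ2⁻¹ ^ 2 * σ1 = σ1 ^ a * σ2 ^ b) :
    σ2⁻¹ * σ1 ^ 2 = σ1 ^ (i - a) * ρ1 * σ2 ^ (b - j - 2) :=
  stmt_6_general ρ0 ρ1 ρ2 h0 h1 h02 σ1 σ2 hσ1 hσ2 i j a b hrel1 hrel2
end

section
/- Let G be a group generated by involutions ρ₀, ρ₁, ρ₂ with (ρ₀ρ₂)² = 1, σ₁ = ρ₀ρ₁, σ₂ = ρ₁ρ₂. Suppose σ₂⁻¹σ₁ = σ₁^i ρ₁ σ₂^j and σ₂⁻²σ₁ = σ₁^a σ₂^b. Then σ₁ commutes with σ₂^(b-2). -/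
/-!
Conjugation by `ρ₁` inverts both `σ₁ = ρ₀ρ₁` and `σ₂ = ρ₁ρ₂`. Applying it to
`σ₂⁻²σ₁ = σ₁^a σ₂^b` and inverting gives `σ₁σ₂⁻² = σ₂^b σ₁^a`, so
`σ₁σ₂^(b-2) = σ₂^b (σ₁^a σ₂^b) = σ₂^b σ₂⁻² σ₁ = σ₂^(b-2) σ₁`.
-/

section

variable {G : Type*} [Group G]

theorem commute_zpow_sub_two_of_map_eq_inv {F : Type*} [FunLike F G G] [MonoidHomClass F G G]
    (φ : F) {x y : G} (hx : φ x = x⁻¹) (hy : φ y = y⁻¹) {a b : ℤ}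
    (h : y⁻¹ ^ 2 * x = x ^ a * y ^ b) : Commute x (y ^ (b - 2)) := by
  have hφ : y ^ 2 * x⁻¹ = x⁻¹ ^ a * y⁻¹ ^ b := by
    simpa only [map_mul, map_pow, map_zpow, map_inv, hx, hy, inv_inv] using congrArg φ h
  calc x * y ^ (b - 2)
      = (y ^ 2 * x⁻¹)⁻¹ * y ^ b := by group
    _ = y ^ b * (x ^ a * y ^ b) := by rw [hφ]; group
    _ = y ^ (b - 2) * x := by rw [← h]; group

theorem MulAut.conj_mul_self_eq_inv {s t : G} (hs : s ^ 2 = 1) (ht : t ^ 2 = 1) :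
    MulAut.conj s (t * s) = (t * s)⁻¹ := by
  have hs' : s * s = 1 := pow_two s ▸ hs
  rw [MulAut.conj_apply, mul_inv_rev, inv_eq_of_mul_eq_one_right hs',
    inv_eq_of_mul_eq_one_right (pow_two t ▸ ht), mul_assoc, mul_assoc, hs', mul_one]

theorem MulAut.conj_self_mul_eq_inv {s t : G} (hs : s ^ 2 = 1) (ht : t ^ 2 = 1) :
    MulAut.conj s (s * t) = (s * t)⁻¹ := by
  have hs' : s * s = 1 := pow_two s ▸ hs
  rw [MulAut.conj_apply, mul_inv_rev, inv_eq_of_mul_eq_one_right hs',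
    inv_eq_of_mul_eq_one_right (pow_two t ▸ ht), ← mul_assoc, hs', one_mul]

end

theorem stmt_7_general {G : Type*} [Group G] (ρ0 ρ1 ρ2 : G)
    (h0 : ρ0 ^ 2 = 1) (h1 : ρ1 ^ 2 = 1) (h2 : ρ2 ^ 2 = 1)
    (σ1 σ2 : G) (hσ1 : σ1 = ρ0 * ρ1) (hσ2 : σ2 = ρ1 * ρ2)
    (a b : ℤ)
    (hrel2 : σ2⁻¹ ^ 2 * σ1 = σ1 ^ a * σ2 ^ b) :
    σ1 * σ2 ^ (b - 2) = σ2 ^ (b - 2) * σ1 := by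
  subst hσ1 hσ2
  exact (commute_zpow_sub_two_of_map_eq_inv (MulAut.conj ρ1)
    (MulAut.conj_mul_self_eq_inv h1 h0) (MulAut.conj_self_mul_eq_inv h1 h2) hrel2).eq

theorem stmt_7 {G : Type*} [Group G] (ρ0 ρ1 ρ2 : G)
    (h0 : ρ0 ^ 2 = 1) (h1 : ρ1 ^ 2 = 1) (h2 : ρ2 ^ 2 = 1)
    (h02 : (ρ0 * ρ2) ^ 2 = 1)
    (hgen : Subgroup.closure {ρ0, ρ1, ρ2} = ⊤)
    (σ1 σ2 : G) (hσ1 : σ1 = ρ0 * ρ1) (hσ2 : σ2 = ρ1 * ρ2)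
    (i j a b : ℤ)
    (hrel1 : σ2⁻¹ * σ1 = σ1 ^ i * ρ1 * σ2 ^ j)
    (hrel2 : σ2⁻¹ ^ 2 * σ1 = σ1 ^ a * σ2 ^ b) :
    σ1 * σ2 ^ (b - 2) = σ2 ^ (b - 2) * σ1 :=
  stmt_7_general ρ0 ρ1 ρ2 h0 h1 h2 σ1 σ2 hσ1 hσ2 a b hrel2
end

section
/- Let G be a group generated by involutions ρ₀, ρ₁, ρ₂ with (ρ₀ρ₂)² = 1, σ₁ = ρ₀ρ₁, σ₂ = ρ₁ρ₂. Suppose σ₂⁻¹σ₁ = σ₁^i ρ₁ σ₂^j and σ₂⁻²σ₁ = σ₁^a σ₂^b. Then conjugation by σ₂ inverts σ₁^(i-3-a), i.e. σ₂ σ₁^(i-3-a) σ₂⁻¹ = σ₁^(-(i-3-a)). -/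
/-!
Write `x = σ₁`, `s = σ₂`, `w = s⁻¹ x s`, and let `K` be the additive group of exponents `k` with
`s x^k s⁻¹ = x^(-k)`, equivalently `w^k = x^(-k)`. The relation `(ρ₀ρ₂)² = 1` says `x s x = s⁻¹`,
and the first hypothesis identifies the reflection `ρ₁ s^j` with `x^(-i) s⁻¹ x`, so
`x^(-i) s⁻¹ x s^m` is an involution for every `m`. For `m = 0` and `m = -b` (using the second
hypothesis) this puts `2 - i` and `i + 1 - a` in `K`; for `m = ±1` it gives a relation free of `i`,
which together with `s` commuting with `s^b` yields `w^(1-a) x⁻² = x^(1-a) w²`. Conjugation by `s`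
turns this into `x^(1-a) w⁻² = w^(1-a) x²`, and the two together give `4 ∈ K`. Hence
`i - 3 - a = (i + 1 - a) - 4 ∈ K`.
-/

section ExponentsInvertedBy

variable {G : Type*} [Group G]

def exponentsInvertedBy (g x : G) : AddSubgroup ℤ where
  carrier := {k | g * x ^ k * g⁻¹ = x ^ (-k)}
  add_mem' {m n} hm hn := by
    calc g * x ^ (m + n) * g⁻¹ = (g * x ^ m * g⁻¹) * (g * x ^ n * g⁻¹) := by group
      _ = x ^ (-(m + n)) := by rw [hm, hn]; group
  zero_mem' := by simp
  neg_mem' {k} hk := by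
    change g * x ^ (-k) * g⁻¹ = x ^ (- -k)
    rw [← conj_zpow, zpow_neg, conj_zpow, hk, neg_neg, zpow_neg, inv_inv]

theorem mem_exponentsInvertedBy {g x : G} {k : ℤ} :
    k ∈ exponentsInvertedBy g x ↔ g * x ^ k * g⁻¹ = x ^ (-k) :=
  Iff.rfl

theorem inv_conj_zpow (g x : G) (k : ℤ) : (g⁻¹ * x * g) ^ k = g⁻¹ * x ^ k * g := by
  simpa only [inv_inv] using conj_zpow (a := g⁻¹) (b := x) (i := k)

theorem mem_exponentsInvertedBy_iff_inv_conj {g x : G} {k : ℤ} :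
    k ∈ exponentsInvertedBy g x ↔ (g⁻¹ * x * g) ^ k = x ^ (-k) := by
  rw [← neg_mem_iff, mem_exponentsInvertedBy, neg_neg, inv_conj_zpow]
  constructor <;> intro h
  · rw [← h]; group
  · rw [← h]; group

end ExponentsInvertedBy

section Relations

variable {G : Type*} [Group G] {x w : G}

theorem sq_eq_of_sq_eq_one_of_zpow_eq {i : ℤ} (hc : w ^ (2 - i) = x ^ (i - 2))
    (h₁ : (x ^ (-i) * w) ^ 2 = 1) (h₂ : (x ^ (-i) * w ^ 2 * x) ^ 2 = 1) :
    w ^ 2 = x⁻¹ * w * x ^ (-2 : ℤ) * w⁻¹ * x := by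
  rw [sq] at h₁ h₂
  have e₁ : w * x ^ (-2 : ℤ) * w = x ^ (2 * i - 2) :=
    calc w * x ^ (-2 : ℤ) * w = w * x ^ (-i) * w ^ (2 - i) * w := by rw [hc]; group
      _ = x ^ i * (x ^ (-i) * w * (x ^ (-i) * w)) * w ^ (2 - i) := by group
      _ = x ^ (2 * i - 2) := by rw [h₁, hc]; group
  have e₂ : w ^ 2 * x⁻¹ * w ^ 2 = x ^ (2 * i - 3) :=
    calc w ^ 2 * x⁻¹ * w ^ 2 = w ^ 2 * x ^ (1 - i) * w ^ (2 - i) * w ^ 2 := by rw [hc]; group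
      _ = x ^ i * (x ^ (-i) * w ^ 2 * x * (x ^ (-i) * w ^ 2 * x)) * x⁻¹ * w ^ (2 - i) := by
        group
      _ = x ^ (2 * i - 3) := by rw [h₂, hc]; group
  calc w ^ 2 = (w ^ 2 * x⁻¹ * w ^ 2) * w ^ (-2 : ℤ) * x := by group
    _ = x⁻¹ * (w * x ^ (-2 : ℤ) * w) * w ^ (-2 : ℤ) * x := by rw [e₁, e₂]; group
    _ = x⁻¹ * w * x ^ (-2 : ℤ) * w⁻¹ * x := by group

theorem zpow_mul_zpow_neg_two_eq_of_sq_eq {a : ℤ}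
    (hw : w ^ 2 = x⁻¹ * w * x ^ (-2 : ℤ) * w⁻¹ * x)
    (h : w ^ (-a) * x * w ^ 2 = x ^ (1 - a) * w * x) :
    w ^ (1 - a) * x ^ (-2 : ℤ) = x ^ (1 - a) * w ^ 2 :=
  calc w ^ (1 - a) * x ^ (-2 : ℤ)
      = w ^ (-a) * x * (x⁻¹ * w * x ^ (-2 : ℤ) * w⁻¹ * x) * x⁻¹ * w := by group
    _ = x ^ (1 - a) * w ^ 2 := by rw [← hw, h, sq]; group

end Relations

section RotationSubgroup

variable {G : Type*} [Group G] {x s : G}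

theorem sq_mul_zpow_eq_one {r : G} (hr : r ^ 2 = 1) (hrs : r * s * r⁻¹ = s⁻¹) (m : ℤ) :
    (r * s ^ m) ^ 2 = 1 :=
  calc (r * s ^ m) ^ 2 = (r * s ^ m * r⁻¹) * r ^ 2 * s ^ m := by simp only [sq]; group
    _ = 1 := by rw [← conj_zpow, hrs, hr]; group

theorem conj_eq_of_mul_mul_eq_inv (hxs : x * s * x = s⁻¹) :
    s * x * s⁻¹ = x⁻¹ * (s⁻¹ * x * s) * x :=
  calc s * x * s⁻¹ = s * x * (x * s * x) := by rw [hxs]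
    _ = x⁻¹ * ((x * s * x) * x * s) * x := by group
    _ = x⁻¹ * (s⁻¹ * x * s) * x := by rw [hxs]

theorem add_add_one_mem_exponentsInvertedBy (hxs : x * s * x = s⁻¹) {p q : ℤ}
    (h : (x ^ p * s⁻¹ * x ^ q) ^ 2 = 1) : p + q + 1 ∈ exponentsInvertedBy s x := by
  rw [mem_exponentsInvertedBy_iff_inv_conj, inv_conj_zpow]
  calc s⁻¹ * x ^ (p + q + 1) * s
      = x ^ (-p) * (x ^ p * s⁻¹ * x ^ q * (x ^ p * (x * s * x) * x ^ q)) * x ^ (-q - 1) := by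
        group
    _ = x ^ (-(p + q + 1)) := by rw [hxs, ← sq, h]; group

theorem zpow_mul_sq_eq_of_commute (hxs : x * s * x = s⁻¹) {a : ℤ}
    (hc : Commute s (x ^ (-a) * s⁻¹ ^ 2 * x)) :
    (s⁻¹ * x * s) ^ (-a) * x * (s⁻¹ * x * s) ^ 2 = x ^ (1 - a) * (s⁻¹ * x * s) * x := by
  have hsx := conj_eq_of_mul_mul_eq_inv hxs
  have hsw : s * (s⁻¹ * x * s) * s⁻¹ = x := by group
  have hc' := hc.mul_inv_cancel
  rw [show x ^ (-a) * s⁻¹ ^ 2 * x = x ^ (-a) * (s⁻¹ * x * s) * x ^ 2 by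
    rw [← hxs]; simp only [sq]; group] at hc'
  generalize s⁻¹ * x * s = w at hsx hsw hc' ⊢
  have e : s * (x ^ (-a) * w * x ^ 2) * s⁻¹ = x⁻¹ * w ^ (-a) * x * w ^ 2 * x :=
    calc s * (x ^ (-a) * w * x ^ 2) * s⁻¹
        = (s * x ^ (-a) * s⁻¹) * (s * w * s⁻¹) * (s * x * s⁻¹) * (s * x * s⁻¹) := by
          simp only [sq]; group
      _ = (x⁻¹ * w ^ (-a) * x) * x * (x⁻¹ * w * x) * (x⁻¹ * w * x) := by
        rw [← conj_zpow, hsx, hsw, inv_conj_zpow]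
      _ = x⁻¹ * w ^ (-a) * x * w ^ 2 * x := by simp only [sq]; group
  calc w ^ (-a) * x * w ^ 2 = x * (x⁻¹ * w ^ (-a) * x * w ^ 2 * x) * x⁻¹ := by group
    _ = x ^ (1 - a) * w * x := by rw [← e, hc']; group

theorem four_mem_exponentsInvertedBy (hxs : x * s * x = s⁻¹) {m : ℤ}
    (h : (s⁻¹ * x * s) ^ m * x ^ (-2 : ℤ) = x ^ m * (s⁻¹ * x * s) ^ 2) :
    4 ∈ exponentsInvertedBy s x := by
  have hsx := conj_eq_of_mul_mul_eq_inv hxs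
  have hsw : s * (s⁻¹ * x * s) * s⁻¹ = x := by group
  rw [mem_exponentsInvertedBy_iff_inv_conj]
  generalize s⁻¹ * x * s = w at h hsx hsw ⊢
  have h' : x ^ m * w ^ (-2 : ℤ) = w ^ m * x ^ 2 := by
    have := congrArg (MulAut.conj s) h
    rw [map_mul, map_mul, map_zpow, map_zpow, map_pow, map_zpow, MulAut.conj_apply,
      MulAut.conj_apply, hsx, hsw, inv_conj_zpow, inv_conj_zpow] at this
    calc x ^ m * w ^ (-2 : ℤ) = x * (x ^ m * (x⁻¹ * w ^ (-2 : ℤ) * x)) * x⁻¹ := by group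
      _ = w ^ m * x ^ 2 := by rw [this]; group
  have e1 : w ^ m = x ^ m * w ^ 2 * x ^ 2 := by rw [← mul_inv_eq_iff_eq_mul, ← h]; group
  have e2 : w ^ m = x ^ m * w ^ (-2 : ℤ) * x ^ (-2 : ℤ) := by rw [h']; group
  calc w ^ (4 : ℤ) = w ^ 2 * ((x ^ m)⁻¹ * (x ^ m * w ^ 2 * x ^ 2)) * x ^ (-2 : ℤ) := by group
    _ = w ^ 2 * ((x ^ m)⁻¹ * (x ^ m * w ^ (-2 : ℤ) * x ^ (-2 : ℤ))) * x ^ (-2 : ℤ) := by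
      rw [← e1, e2]
    _ = x ^ (-4 : ℤ) := by group

theorem sub_three_sub_mem_exponentsInvertedBy (hxs : x * s * x = s⁻¹) {i a b : ℤ}
    (hrefl : ∀ m : ℤ, (x ^ (-i) * s⁻¹ * x * s ^ m) ^ 2 = 1)
    (hb : s ^ b = x ^ (-a) * s⁻¹ ^ 2 * x) : i - 3 - a ∈ exponentsInvertedBy s x := by
  have h2i : 2 - i ∈ exponentsInvertedBy s x := by
    have := add_add_one_mem_exponentsInvertedBy hxs (p := -i) (q := 1) (by simpa using hrefl 0)
    rwa [show -i + 1 + 1 = 2 - i by ring] at this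
  have hai : i + 1 - a ∈ exponentsInvertedBy s x := by
    have h := hrefl (-b)
    rw [zpow_neg s, hb, show x ^ (-i) * s⁻¹ * x * (x ^ (-a) * s⁻¹ ^ 2 * x)⁻¹
      = (x ^ (-a) * s⁻¹ * x ^ i)⁻¹ by simp only [sq]; group, inv_pow, inv_eq_one] at h
    have := add_add_one_mem_exponentsInvertedBy hxs h
    rwa [show -a + i + 1 = i + 1 - a by ring] at this
  have hc : (s⁻¹ * x * s) ^ (2 - i) = x ^ (i - 2) := by
    rw [mem_exponentsInvertedBy_iff_inv_conj] at h2i; rw [h2i, neg_sub]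
  have h₁ : (x ^ (-i) * (s⁻¹ * x * s)) ^ 2 = 1 := by
    simpa only [zpow_one, mul_assoc] using hrefl 1
  have h₂ : (x ^ (-i) * (s⁻¹ * x * s) ^ 2 * x) ^ 2 = 1 := by
    convert hrefl (-1) using 2
    rw [show s ^ (-1 : ℤ) = x * s * x by rw [zpow_neg_one, hxs]]; simp only [sq]; group
  have hS := zpow_mul_sq_eq_of_commute hxs (hb ▸ Commute.self_zpow s b)
  have h4 := four_mem_exponentsInvertedBy hxs
    (zpow_mul_zpow_neg_two_eq_of_sq_eq (sq_eq_of_sq_eq_one_of_zpow_eq hc h₁ h₂) hS)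
  rw [show i - 3 - a = (i + 1 - a) - 4 by ring]
  exact sub_mem hai h4

end RotationSubgroup

theorem stmt_8_general {G : Type*} [Group G] (ρ0 ρ1 ρ2 : G)
    (h1 : ρ1 ^ 2 = 1) (h2 : ρ2 ^ 2 = 1)
    (h02 : (ρ0 * ρ2) ^ 2 = 1)
    (σ1 σ2 : G) (hσ1 : σ1 = ρ0 * ρ1) (hσ2 : σ2 = ρ1 * ρ2)
    (i j a b : ℤ)
    (hrel1 : σ2⁻¹ * σ1 = σ1 ^ i * ρ1 * σ2 ^ j)
    (hrel2 : σ2⁻¹ ^ 2 * σ1 = σ1 ^ a * σ2 ^ b) :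
    σ2 * σ1 ^ (i - 3 - a) * σ2⁻¹ = σ1 ^ (-(i - 3 - a)) := by
  have hρ1 : ρ1⁻¹ = ρ1 := inv_eq_of_mul_eq_one_right (by rw [← sq, h1])
  have hρ2 : ρ2⁻¹ = ρ2 := inv_eq_of_mul_eq_one_right (by rw [← sq, h2])
  have hu : σ1 * σ2 = ρ0 * ρ2 := by
    rw [hσ1, hσ2, mul_assoc, ← mul_assoc ρ1, ← sq, h1, one_mul]
  have hxs : σ1 * σ2 * σ1 = σ2⁻¹ := by
    rw [← hu, sq] at h02
    exact eq_inv_of_mul_eq_one_left (by simpa only [mul_assoc] using h02)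
  have hrs : ρ1 * σ2 * ρ1⁻¹ = σ2⁻¹ := by
    rw [hσ2, mul_inv_rev, hρ1, hρ2, ← mul_assoc, ← sq, h1, one_mul]
  have ht : σ1 ^ (-i) * σ2⁻¹ * σ1 = ρ1 * σ2 ^ j := by rw [mul_assoc, hrel1]; group
  have hb : σ2 ^ b = σ1 ^ (-a) * σ2⁻¹ ^ 2 * σ1 := by rw [mul_assoc, hrel2]; group
  refine mem_exponentsInvertedBy.mp (sub_three_sub_mem_exponentsInvertedBy hxs (fun m => ?_) hb)
  rw [ht, mul_assoc, ← zpow_add]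
  exact sq_mul_zpow_eq_one h1 hrs _

theorem stmt_8 {G : Type*} [Group G] (ρ0 ρ1 ρ2 : G)
    (h0 : ρ0 ^ 2 = 1) (h1 : ρ1 ^ 2 = 1) (h2 : ρ2 ^ 2 = 1)
    (h02 : (ρ0 * ρ2) ^ 2 = 1)
    (hgen : Subgroup.closure {ρ0, ρ1, ρ2} = ⊤)
    (σ1 σ2 : G) (hσ1 : σ1 = ρ0 * ρ1) (hσ2 : σ2 = ρ1 * ρ2)
    (i j a b : ℤ)
    (hrel1 : σ2⁻¹ * σ1 = σ1 ^ i * ρ1 * σ2 ^ j)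
    (hrel2 : σ2⁻¹ ^ 2 * σ1 = σ1 ^ a * σ2 ^ b) :
    σ2 * σ1 ^ (i - 3 - a) * σ2⁻¹ = σ1 ^ (-(i - 3 - a)) :=
  stmt_8_general ρ0 ρ1 ρ2 h1 h2 h02 σ1 σ2 hσ1 hσ2 i j a b hrel1 hrel2
end

section
/- Let Γ = ⟨ρ₀, ρ₁, ρ₂⟩ be a rank-3 string C-group (each ρ_i an involution, (ρ₀ρ₂)² = 1, satisfying the intersection condition Γ_I ∩ Γ_J = Γ_{I∩J} for all subsets I, J of {0,1,2}, where Γ_I = ⟨ρ_i : i ∈ I⟩). Let N = ⟨(ρ₀ρ₁)^k⟩ for some k ≥ 2 and suppose N is normal in Γ. Then in Γ/N, the images of ⟨ρ₀, ρ₁⟩ and ⟨ρ₁, ρ₂⟩ intersect in the subgroup generated by the image of ρ₁. -/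
/-! The kernel `N` of the quotient map lies in `⟨ρ₀, ρ₁⟩`, so taking images in `G ⧸ N` commutes
with intersecting `⟨ρ₀, ρ₁⟩` and `⟨ρ₁, ρ₂⟩`; the intersection condition identifies that
intersection upstairs as `⟨ρ₁⟩`. -/

namespace Subgroup

variable {G H : Type*} [Group G] [Group H]

theorem map_inf_of_ker_le (f : G →* H) {A B : Subgroup G} (hA : f.ker ≤ A) :
    (A ⊓ B).map f = A.map f ⊓ B.map f := by
  refine le_antisymm (map_inf_le A B f) ?_
  rintro _ ⟨hyA, b, hb, rfl⟩
  have hbA : b ∈ A := by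
    rw [← comap_map_eq_self hA]
    exact hyA
  exact ⟨b, ⟨hbA, hb⟩, rfl⟩

end Subgroup

theorem closure_pair_inf_closure_pair_of_intersection {G : Type*} [Group G] (ρ : Fin 3 → G)
    (hint : ∀ I J : Set (Fin 3),
      Subgroup.closure (ρ '' I) ⊓ Subgroup.closure (ρ '' J) =
        Subgroup.closure (ρ '' (I ∩ J))) :
    Subgroup.closure {ρ 0, ρ 1} ⊓ Subgroup.closure {ρ 1, ρ 2} = Subgroup.closure {ρ 1} := by
  have hIJ : ({0, 1} ∩ {1, 2} : Set (Fin 3)) = {1} := by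
    ext x
    fin_cases x <;> simp
  simpa [hIJ, Set.image_insert_eq] using hint {0, 1} {1, 2}

theorem stmt_9_general {G : Type*} [Group G] (ρ : Fin 3 → G)
    (hint : ∀ I J : Set (Fin 3),
      Subgroup.closure (ρ '' I) ⊓ Subgroup.closure (ρ '' J) =
        Subgroup.closure (ρ '' (I ∩ J)))
    (k : ℕ)
    (N : Subgroup G) (hN : N = Subgroup.zpowers ((ρ 0 * ρ 1) ^ k))
    [hnorm : N.Normal] :
    Subgroup.closure {QuotientGroup.mk' N (ρ 0), QuotientGroup.mk' N (ρ 1)} ⊓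
      Subgroup.closure {QuotientGroup.mk' N (ρ 1), QuotientGroup.mk' N (ρ 2)} =
    Subgroup.closure {QuotientGroup.mk' N (ρ 1)} := by
  have hNA : (QuotientGroup.mk' N).ker ≤ Subgroup.closure {ρ 0, ρ 1} := by
    rw [QuotientGroup.ker_mk', hN, Subgroup.zpowers_le]
    exact pow_mem (mul_mem (Subgroup.subset_closure (by simp))
      (Subgroup.subset_closure (by simp))) k
  set π := QuotientGroup.mk' N
  rw [← Set.image_pair π, ← Set.image_pair π, ← Set.image_singleton (f := π),
    ← MonoidHom.map_closure, ← MonoidHom.map_closure, ← MonoidHom.map_closure,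
    ← Subgroup.map_inf_of_ker_le _ hNA, closure_pair_inf_closure_pair_of_intersection ρ hint]

/-- In the quotient of a rank-3 string C-group by a normal subgroup generated by
`(ρ₀ρ₁)^k`, the images of `⟨ρ₀, ρ₁⟩` and `⟨ρ₁, ρ₂⟩` intersect in the subgroup
generated by the image of `ρ₁`. -/
theorem stmt_9 {G : Type*} [Group G] (ρ : Fin 3 → G)
    (hinv : ∀ t, (ρ t) ^ 2 = 1) (h02 : (ρ 0 * ρ 2) ^ 2 = 1)
    (hgen : Subgroup.closure (Set.range ρ) = ⊤)
    (hint : ∀ I J : Set (Fin 3),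
      Subgroup.closure (ρ '' I) ⊓ Subgroup.closure (ρ '' J) =
        Subgroup.closure (ρ '' (I ∩ J)))
    (k : ℕ) (hk : 2 ≤ k)
    (N : Subgroup G) (hN : N = Subgroup.zpowers ((ρ 0 * ρ 1) ^ k))
    [hnorm : N.Normal] :
    Subgroup.closure {QuotientGroup.mk' N (ρ 0), QuotientGroup.mk' N (ρ 1)} ⊓
      Subgroup.closure {QuotientGroup.mk' N (ρ 1), QuotientGroup.mk' N (ρ 2)} =
    Subgroup.closure {QuotientGroup.mk' N (ρ 1)} :=
  stmt_9_general ρ hint k N hN (hnorm := hnorm)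
end

section
/- Let G = ⟨ρ₀, ρ₁, ρ₂⟩ with each ρ_i an involution and (ρ₀ρ₂)² = 1; let σ₁ = ρ₀ρ₁ and σ₂ = ρ₁ρ₂. Suppose N = ⟨σ₁^m⟩ is a normal subgroup of G. If the quotient G/N is tight (i.e., every element of G/N is the image of some σ₁^i ρ₁^j σ₂^k), then G itself is tight, i.e., G = ⟨σ₁⟩⟨ρ₁⟩⟨σ₂⟩. -/
/-!
Modulo `N ≤ ⟨σ₁⟩`, a factorisation `σ₁^i ρ₁^e σ₂^k` of the image of `g` lifts to
`g = σ₁^i ρ₁^e σ₁^j σ₂^k`, after conjugating the error term from `N` past `σ₂^k` using normality.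
Since `ρ₁` inverts `σ₁`, the factor `σ₁^j` moves left across `ρ₁^e` and merges with `σ₁^i`.
-/

section

variable {G : Type*} [Group G]

theorem mul_mul_eq_inv_mul_of_sq_eq_one {a b : G} (ha : a ^ 2 = 1) (hb : b ^ 2 = 1) :
    b * (a * b) = (a * b)⁻¹ * b := by
  rw [mul_inv_rev, inv_eq_of_mul_eq_one_right (pow_two b ▸ hb),
    inv_eq_of_mul_eq_one_right (pow_two a ▸ ha), mul_assoc]

theorem exists_pow_mul_zpow_eq_zpow_mul_pow {r s : G} (h : r * s = s⁻¹ * r) (e : ℕ) (j : ℤ) :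
    ∃ j' : ℤ, r ^ e * s ^ j = s ^ j' * r ^ e := by
  induction e generalizing j with
  | zero => exact ⟨j, by simp⟩
  | succ e ih =>
    obtain ⟨j', hj'⟩ := ih (-j)
    have hr : r * s ^ j = s ^ (-j) * r := by
      rw [zpow_neg, ← inv_zpow]
      exact SemiconjBy.zpow_right h j
    exact ⟨j', by rw [pow_succ, mul_assoc, hr, ← mul_assoc, hj', mul_assoc, ← pow_succ]⟩

theorem exists_eq_mul_zpow_mul_of_mk'_eq {N : Subgroup G} [N.Normal] {s : G}
    (hN : N ≤ Subgroup.zpowers s) {g a b : G}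
    (h : QuotientGroup.mk' N g = QuotientGroup.mk' N (a * b)) :
    ∃ j : ℤ, g = a * s ^ j * b := by
  obtain ⟨z, hzN, hz⟩ := (QuotientGroup.mk'_eq_mk' N).mp h.symm
  obtain ⟨j, hj⟩ := Subgroup.mem_zpowers_iff.mp (hN (‹N.Normal›.conj_mem z hzN b))
  exact ⟨j, by rw [hj, ← hz]; group⟩

end

theorem stmt_10_general {G : Type*} [Group G] (ρ0 ρ1 : G)
    (h0 : ρ0 ^ 2 = 1) (h1 : ρ1 ^ 2 = 1)
    (σ1 σ2 : G) (hσ1 : σ1 = ρ0 * ρ1)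
    (m : ℤ)
    (N : Subgroup G) (hN : N = Subgroup.zpowers (σ1 ^ m))
    [hnorm : N.Normal]
    (htight : ∀ x : G ⧸ N, ∃ (i k : ℤ) (e : ℕ), e ≤ 1 ∧
      x = QuotientGroup.mk' N (σ1 ^ i * ρ1 ^ e * σ2 ^ k)) :
    ∀ g : G, ∃ (i k : ℤ) (e : ℕ), e ≤ 1 ∧ g = σ1 ^ i * ρ1 ^ e * σ2 ^ k := by
  intro g
  obtain ⟨i, k, e, he, hg⟩ := htight (QuotientGroup.mk' N g)
  have hN_le : N ≤ Subgroup.zpowers σ1 :=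
    hN ▸ (Subgroup.zpowers_le.mpr (Subgroup.zpow_mem_zpowers σ1 m))
  obtain ⟨j, rfl⟩ := exists_eq_mul_zpow_mul_of_mk'_eq hN_le hg
  have hinv : ρ1 * σ1 = σ1⁻¹ * ρ1 := hσ1 ▸ mul_mul_eq_inv_mul_of_sq_eq_one h0 h1
  obtain ⟨j', hj'⟩ := exists_pow_mul_zpow_eq_zpow_mul_pow hinv e j
  exact ⟨i + j', k, e, he, by rw [mul_assoc (σ1 ^ i), hj', zpow_add]; group⟩

/-- If `N = ⟨σ₁^m⟩` is normal in the sggi `G` and `G/N` is tight, then `G` is tight. -/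
theorem stmt_10 {G : Type*} [Group G] (ρ0 ρ1 ρ2 : G)
    (h0 : ρ0 ^ 2 = 1) (h1 : ρ1 ^ 2 = 1) (h2 : ρ2 ^ 2 = 1)
    (h02 : (ρ0 * ρ2) ^ 2 = 1)
    (hgen : Subgroup.closure {ρ0, ρ1, ρ2} = ⊤)
    (σ1 σ2 : G) (hσ1 : σ1 = ρ0 * ρ1) (hσ2 : σ2 = ρ1 * ρ2)
    (m : ℤ)
    (N : Subgroup G) (hN : N = Subgroup.zpowers (σ1 ^ m))
    [hnorm : N.Normal]
    (htight : ∀ x : G ⧸ N, ∃ (i k : ℤ) (e : ℕ), e ≤ 1 ∧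
      x = QuotientGroup.mk' N (σ1 ^ i * ρ1 ^ e * σ2 ^ k)) :
    ∀ g : G, ∃ (i k : ℤ) (e : ℕ), e ≤ 1 ∧ g = σ1 ^ i * ρ1 ^ e * σ2 ^ k :=
  stmt_10_general ρ0 ρ1 h0 h1 σ1 σ2 hσ1 m N hN (hnorm := hnorm) htight
end
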